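/- Fix β > 0 and ρ_1, ..., ρ_n ∈ ℝ, and let E_{r,n}(θ) := Σ_{s=0}^{r} (-1)^{r+s} e_s(cosh(βθ_1),...,cosh(βθ_n)) · h_{r-s}(cosh(βρ_r),...,cosh(βρ_n)) for θ ∈ ℝⁿ. Then for each fixed θ ∈ ℝⁿ and each r with 1 ≤ r ≤ n, lim_{β→0⁺} β^{-2r} E_{r,n}(θ) = 2^{-r} Σ_{s=0}^{r} (-1)^{r+s} e_s(θ_1²,...,θ_n²) h_{r-s}(ρ_r²,...,ρ_n²). -/

import Mathlib

/-!
With `x j = cosh (β θ_j)` and `y i = cosh (β ρ_i)`, `E_{r,n}` is the coefficient `E_r(S, T)` of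
`t ^ r` in `∏_{j ∈ S} (1 + x j t) / ∏_{i ∈ T} (1 + y i t)` for `S = [1, n]`, `T = [r, n]`.
Removing a variable from each of `S` and `T` gives
`E_{r+1}(S + a, T + b) = E_{r+1}(S, T) + (x a - y b) E_r(S, T + b)`,
a recursion preserving `#S + 1 = #T + r` and shrinking `S`. Along it every factor `x a - y b`
is `β² (θ_a² - ρ_b²) / 2 + o(β²)`, so by induction on `#S` the limit of `β^{-2r} E_r(S, T)` obeys
the same recursion with `θ², ρ²` in place of `x, y`, divided by `2` per step.
-/

/-- The elementary symmetric polynomial of degree `s` in the variables `t j`, `j ∈ S`. -/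
def esym (s : ℕ) (S : Finset ℕ) (t : ℕ → ℝ) : ℝ :=
  ∑ J ∈ S.powersetCard s, ∏ j ∈ J, t j

/-- The complete homogeneous symmetric polynomial of degree `k` in the variables `t j`, `j ∈ S`. -/
def hsym (k : ℕ) (S : Finset ℕ) (t : ℕ → ℝ) : ℝ :=
  ∑ m ∈ S.sym k, ((m : Multiset ℕ).map t).prod

open Finset Filter Topology

section SymmetricPolynomials

variable (t : ℕ → ℝ)

@[simp]
lemma esym_zero (S : Finset ℕ) : esym 0 S t = 1 := by
  simp [esym]

lemma esym_eq_zero_of_card_lt {s : ℕ} {S : Finset ℕ} (h : #S < s) : esym s S t = 0 := by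
  simp [esym, powersetCard_eq_empty.2 h]

lemma esym_succ_insert {a : ℕ} {S : Finset ℕ} (ha : a ∉ S) (s : ℕ) :
    esym (s + 1) (insert a S) t = esym (s + 1) S t + t a * esym s S t := by
  have notMem {J : Finset ℕ} (hJ : J ∈ S.powersetCard s) : a ∉ J :=
    fun h => ha ((mem_powersetCard.1 hJ).1 h)
  have hdisj : Disjoint (S.powersetCard (s + 1)) ((S.powersetCard s).image (insert a)) := by
    refine disjoint_left.2 fun J hJ hJ' => ?_
    obtain ⟨K, -, rfl⟩ := mem_image.1 hJ'
    exact ha ((mem_powersetCard.1 hJ).1 (mem_insert_self a K))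
  have hinj : Set.InjOn (insert a) (S.powersetCard s : Set (Finset ℕ)) :=
    fun J hJ K hK h => by rw [← erase_insert (notMem hJ), ← erase_insert (notMem hK), h]
  rw [esym, powersetCard_succ_insert ha, sum_union hdisj, sum_image hinj, esym, esym, mul_sum]
  exact congrArg _ (sum_congr rfl fun J hJ => prod_insert (notMem hJ))

@[simp]
lemma hsym_zero (S : Finset ℕ) : hsym 0 S t = 1 := by
  rw [hsym, sym_zero, sum_singleton]
  rfl

@[simp]
lemma hsym_succ_empty (k : ℕ) : hsym (k + 1) ∅ t = 0 := by
  simp [hsym]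

lemma filter_notMem_sym_insert {a : ℕ} {S : Finset ℕ} (ha : a ∉ S) (k : ℕ) :
    ((insert a S).sym k).filter (a ∉ ·) = S.sym k := by
  ext m
  simp only [mem_filter, mem_sym_iff, mem_insert]
  constructor
  · rintro ⟨hm, ham⟩ b hb
    exact (hm b hb).resolve_left (by rintro rfl; exact ham hb)
  · exact fun hm => ⟨fun b hb => Or.inr (hm b hb), fun h => ha (hm a h)⟩

lemma sum_filter_mem_sym_succ {a : ℕ} {U : Finset ℕ} (ha : a ∈ U) (k : ℕ) :
    ∑ m ∈ (U.sym (k + 1)).filter (a ∈ ·), ((m : Multiset ℕ).map t).prod =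
      t a * hsym k U t := by
  rw [hsym, mul_sum]
  refine (sum_bij (fun m _ => a ::ₛ m) ?_ ?_ ?_ ?_).symm
  · intro m hm
    refine mem_filter.2 ⟨mem_sym_iff.2 fun b hb => ?_, Sym.mem_cons_self a m⟩
    rcases Sym.mem_cons.1 hb with rfl | hb
    · exact ha
    · exact mem_sym_iff.1 hm b hb
  · exact fun m _ m' _ h => (Sym.cons_inj_right a m m').1 h
  · intro m hm
    obtain ⟨hmU, ham⟩ := mem_filter.1 hm
    refine ⟨m.erase a ham, mem_sym_iff.2 fun b hb => mem_sym_iff.1 hmU b ?_,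
      Sym.cons_erase ham⟩
    rw [← Sym.cons_erase ham]
    exact Sym.mem_cons_of_mem hb
  · intro m _
    rw [Sym.coe_cons, Multiset.map_cons, Multiset.prod_cons]

lemma hsym_succ_insert {a : ℕ} {S : Finset ℕ} (ha : a ∉ S) (k : ℕ) :
    hsym (k + 1) (insert a S) t = hsym (k + 1) S t + t a * hsym k (insert a S) t := by
  rw [hsym, ← sum_filter_not_add_sum_filter _ (a ∈ ·), filter_notMem_sym_insert ha,
    sum_filter_mem_sym_succ t (mem_insert_self a S)]
  rfl

end SymmetricPolynomials

/-- The coefficient of `t ^ r` in `∏_{j ∈ S} (1 + x j * t) / ∏_{i ∈ T} (1 + y i * t)`. -/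
noncomputable def superEsym (r : ℕ) (S T : Finset ℕ) (x y : ℕ → ℝ) : ℝ :=
  ∑ s ∈ range (r + 1), (-1 : ℝ) ^ (r + s) * esym s S x * hsym (r - s) T y

section SuperEsym

variable {S T : Finset ℕ} (x y : ℕ → ℝ)

@[simp]
lemma superEsym_zero : superEsym 0 S T x y = 1 := by
  simp [superEsym]

lemma superEsym_empty_of_card_lt {r : ℕ} (h : #S < r) : superEsym r S ∅ x y = 0 := by
  refine sum_eq_zero fun s hs => ?_
  obtain rfl | hsr := eq_or_lt_of_le (mem_range_succ_iff.1 hs)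
  · rw [esym_eq_zero_of_card_lt x h, mul_zero, zero_mul]
  · obtain ⟨k, hk⟩ := Nat.exists_eq_add_of_lt (Nat.sub_pos_of_lt hsr)
    rw [hk, zero_add, hsym_succ_empty, mul_zero]

lemma superEsym_succ_insert_left {a : ℕ} (ha : a ∉ S) (r : ℕ) :
    superEsym (r + 1) (insert a S) T x y =
      superEsym (r + 1) S T x y + x a * superEsym r S T x y := by
  simp only [superEsym, sum_range_succ' _ (r + 1), esym_succ_insert x ha, esym_zero,
    Nat.add_sub_add_right, add_zero, mul_sum]
  rw [add_right_comm, ← sum_add_distrib]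
  congr 1
  refine sum_congr rfl fun s _ => ?_
  ring

lemma superEsym_succ_insert_right {b : ℕ} (hb : b ∉ T) (r : ℕ) :
    superEsym (r + 1) S (insert b T) x y =
      superEsym (r + 1) S T x y - y b * superEsym r S (insert b T) x y := by
  have hsucc : ∀ s ∈ range (r + 1), r + 1 - s = r - s + 1 := fun s hs => by
    have := mem_range.1 hs; omega
  simp only [superEsym, sum_range_succ _ (r + 1), Nat.sub_self, hsym_zero, mul_sum]
  rw [add_sub_right_comm, ← sum_sub_distrib]
  congr 1
  refine sum_congr rfl fun s hs => ?_
  rw [hsucc s hs, hsym_succ_insert y hb]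
  ring

lemma superEsym_succ_insert_insert {a b : ℕ} (ha : a ∉ S) (hb : b ∉ T) (r : ℕ) :
    superEsym (r + 1) (insert a S) (insert b T) x y =
      superEsym (r + 1) S T x y + (x a - y b) * superEsym r S (insert b T) x y := by
  rw [superEsym_succ_insert_left x y ha, superEsym_succ_insert_right x y hb]
  ring

end SuperEsym

lemma cosh_sub_one_eq_two_mul_sinh_half_sq (u : ℝ) :
    Real.cosh u - 1 = 2 * Real.sinh (u / 2) ^ 2 := by
  have h := Real.cosh_two_mul (u / 2)
  rw [mul_div_cancel₀ u two_ne_zero, Real.cosh_sq'] at h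
  linarith

lemma tendsto_cosh_sub_one_div_sq (a : ℝ) :
    Tendsto (fun β : ℝ => (Real.cosh (β * a) - 1) / β ^ 2) (𝓝[≠] 0) (𝓝 (a ^ 2 / 2)) := by
  have hderiv : HasDerivAt (fun β : ℝ => Real.sinh (β * a / 2)) (a / 2) 0 := by
    simpa using (((hasDerivAt_id (0 : ℝ)).mul_const a).div_const 2).sinh
  have hslope := (hderiv.tendsto_slope_zero.pow 2).const_mul 2
  simp only [zero_add, zero_mul, zero_div, Real.sinh_zero, sub_zero, smul_eq_mul] at hslope
  convert hslope using 2 with β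
  · rw [cosh_sub_one_eq_two_mul_sinh_half_sq]
    ring
  · ring

lemma tendsto_cosh_sub_cosh_div_sq (a b : ℝ) :
    Tendsto (fun β : ℝ => (Real.cosh (β * a) - Real.cosh (β * b)) / β ^ 2) (𝓝[≠] 0)
      (𝓝 ((a ^ 2 - b ^ 2) / 2)) := by
  convert (tendsto_cosh_sub_one_div_sq a).sub (tendsto_cosh_sub_one_div_sq b) using 2 <;> ring

lemma tendsto_superEsym_cosh (θ ρ : ℕ → ℝ) {S T : Finset ℕ} {r : ℕ}
    (h : #S + 1 = #T + r) :
    Tendsto (fun β : ℝ => superEsym r S T (fun j => Real.cosh (β * θ j))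
        (fun i => Real.cosh (β * ρ i)) / β ^ (2 * r))
      (𝓝[≠] 0) (𝓝 (1 / 2 ^ r * superEsym r S T (fun j => θ j ^ 2) (fun i => ρ i ^ 2))) := by
  rcases r with _ | r
  · simp
  obtain rfl | ⟨b, hb⟩ := T.eq_empty_or_nonempty
  · simp [superEsym_empty_of_card_lt _ _ (show #S < r + 1 by simp at h; omega)]
  have hTpos := card_pos.2 ⟨b, hb⟩
  obtain ⟨a, ha⟩ : S.Nonempty := by
    rw [← card_pos]; omega
  have hSpos := card_pos.2 ⟨a, ha⟩
  have hS := card_erase_of_mem ha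
  have hT := card_erase_of_mem hb
  have ih₁ := tendsto_superEsym_cosh θ ρ (S := S.erase a) (T := T.erase b) (r := r + 1)
    (by omega)
  have ih₂ := tendsto_superEsym_cosh θ ρ (S := S.erase a) (T := insert b (T.erase b)) (r := r)
    (by rw [insert_erase hb]; omega)
  rw [← insert_erase ha, ← insert_erase hb]
  simp only [superEsym_succ_insert_insert _ _ (notMem_erase a S) (notMem_erase b T)]
  have hlim := ih₁.add ((tendsto_cosh_sub_cosh_div_sq (θ a) (ρ b)).mul ih₂)
  convert hlim.congr' ?_ using 2
  · ring
  · filter_upwards [self_mem_nhdsWithin] with β (hβ : β ≠ 0)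
    field_simp
    ring
termination_by #S
decreasing_by all_goals exact card_erase_lt_of_mem ha

theorem Ern_small_beta_limit_general (n r : ℕ) (h2 : r ≤ n) (θ ρ : ℕ → ℝ) :
    Filter.Tendsto (fun β : ℝ =>
        (∑ s ∈ Finset.range (r + 1), (-1 : ℝ) ^ (r + s) *
            esym s (Finset.Icc 1 n) (fun j => Real.cosh (β * θ j)) *
            hsym (r - s) (Finset.Icc r n) (fun i => Real.cosh (β * ρ i))) / β ^ (2 * r))
      (nhdsWithin 0 (Set.Ioi 0))
      (nhds ((1 / 2 ^ r) * ∑ s ∈ Finset.range (r + 1), (-1 : ℝ) ^ (r + s) *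
          esym s (Finset.Icc 1 n) (fun j => (θ j) ^ 2) *
          hsym (r - s) (Finset.Icc r n) (fun i => (ρ i) ^ 2))) := by
  have hcard : #(Icc 1 n) + 1 = #(Icc r n) + r := by
    simp only [Nat.card_Icc]
    omega
  exact (tendsto_superEsym_cosh θ ρ hcard).mono_left (nhdsGT_le_nhdsNE 0)

/-- For `E_{r,n}(θ) = Σ_{s=0}^r (-1)^{r+s} e_s(cosh βθ₁,…,cosh βθₙ) h_{r-s}(cosh βρ_r,…,cosh βρₙ)`
one has `lim_{β→0⁺} β^{-2r} E_{r,n}(θ)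
  = 2^{-r} Σ_{s=0}^r (-1)^{r+s} e_s(θ₁²,…,θₙ²) h_{r-s}(ρ_r²,…,ρₙ²)`. -/
theorem Ern_small_beta_limit (n r : ℕ) (h1 : 1 ≤ r) (h2 : r ≤ n) (θ ρ : ℕ → ℝ) :
    Filter.Tendsto (fun β : ℝ =>
        (∑ s ∈ Finset.range (r + 1), (-1 : ℝ) ^ (r + s) *
            esym s (Finset.Icc 1 n) (fun j => Real.cosh (β * θ j)) *
            hsym (r - s) (Finset.Icc r n) (fun i => Real.cosh (β * ρ i))) / β ^ (2 * r))
      (nhdsWithin 0 (Set.Ioi 0))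
      (nhds ((1 / 2 ^ r) * ∑ s ∈ Finset.range (r + 1), (-1 : ℝ) ^ (r + s) *
          esym s (Finset.Icc 1 n) (fun j => (θ j) ^ 2) *
          hsym (r - s) (Finset.Icc r n) (fun i => (ρ i) ^ 2))) :=
  Ern_small_beta_limit_general n r h2 θ ρ
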